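/- Let ε > 0, θ ∈ (0,1] and c > 0, and suppose f admits the local error bound dist₂(w, Ω_*) ≤ c·(f(w) − f_*)^θ for all w ∈ S_ε. Then B_ε ≤ c·ε^θ. Moreover, if w₀ ∈ Ω, ε₀ > 0 satisfies f(w₀) − f_* ≤ ε₀ and ε ≤ ε₀, α > 1, and the integer t satisfies t ≥ α²G²c²/ε^{2(1−θ)}, then for K = ⌈log_α(ε₀/ε)⌉ the RSG iterate w_K satisfies f(w_K) − f_* ≤ 2ε. -/

import Mathlib

open RealInnerProductSpace

noncomputable section

/-- `g` is a subgradient of the convex function `f` at `w`. -/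
def IsSubgradAt {d : ℕ} (f : EuclideanSpace ℝ (Fin d) → ℝ)
    (w g : EuclideanSpace ℝ (Fin d)) : Prop :=
  ∀ u, f w + ⟪g, u - w⟫ ≤ f u

/-- `v` belongs to the normal cone of `Ω` at `w`. -/
def InNormalCone {d : ℕ} (Ω : Set (EuclideanSpace ℝ (Fin d)))
    (w v : EuclideanSpace ℝ (Fin d)) : Prop :=
  ∀ u ∈ Ω, ⟪v, u - w⟫ ≤ 0

/-- `w` is a sequence of stage outputs of the RSG method with parameters
`(w 0, α, ε₀, t)`: within stage `k`, starting from `u k 1 = w (k-1)`, `t` projected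
subgradient steps with constant step size `η_k = ε₀/(α^k G²)` are performed and `w k`
is the average of the `t` iterates of stage `k`. -/
def IsRSGSeq {d : ℕ} (f : EuclideanSpace ℝ (Fin d) → ℝ)
    (Ω : Set (EuclideanSpace ℝ (Fin d))) (G ε₀ α : ℝ) (t : ℕ)
    (w : ℕ → EuclideanSpace ℝ (Fin d)) : Prop :=
  ∃ u g : ℕ → ℕ → EuclideanSpace ℝ (Fin d),
    (∀ k, 1 ≤ k → u k 1 = w (k - 1)) ∧
    (∀ k, 1 ≤ k → ∀ i, 1 ≤ i → i ≤ t →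
      IsSubgradAt f (u k i) (g k i) ∧
      u k (i + 1) ∈ Ω ∧
      ∀ z ∈ Ω, ‖u k (i + 1) - (u k i - (ε₀ / (α ^ k * G ^ 2)) • g k i)‖
        ≤ ‖z - (u k i - (ε₀ / (α ^ k * G ^ 2)) • g k i)‖) ∧
    (∀ k, 1 ≤ k → w k = (t : ℝ)⁻¹ • ∑ i ∈ Finset.Icc 1 t, u k i)


variable {d : ℕ}

local notation "E" => EuclideanSpace ℝ (Fin d)

/-- Variational inequality for a minimizer of distance over a convex set. -/
lemma proj_vi {Ω : Set E} (hΩcvx : Convex ℝ Ω) {y v : E} (hv : v ∈ Ω)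
    (hmin : ∀ z ∈ Ω, ‖v - y‖ ≤ ‖z - y‖) {z : E} (hz : z ∈ Ω) :
    ⟪y - v, z - v⟫ ≤ 0 := by
  by_contra h
  push_neg at h
  set a := ⟪y - v, z - v⟫ with ha
  set C := ‖z - v‖ ^ 2 with hC
  have hC0 : 0 ≤ C := sq_nonneg _
  set l := min 1 (a / (C + 1)) with hl
  have hl0 : 0 < l := lt_min one_pos (div_pos h (by linarith))
  have hl1 : l ≤ 1 := min_le_left _ _
  have hmem : (1 - l) • v + l • z ∈ Ω := hΩcvx hv hz (by linarith) hl0.le (by ring)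
  have hle := hmin _ hmem
  have hsq : ‖v - y‖ ^ 2 ≤ ‖(1 - l) • v + l • z - y‖ ^ 2 := by
    have := norm_nonneg (v - y)
    nlinarith [hle]
  have hrw : (1 - l) • v + l • z - y = (v - y) + l • (z - v) := by
    module
  rw [hrw, norm_add_sq_real, real_inner_smul_right, norm_smul] at hsq
  have hinn : ⟪v - y, z - v⟫ = -a := by
    rw [ha, ← inner_neg_left]
    congr 1
    abel
  rw [hinn] at hsq
  have h2 : 2 * l * a ≤ l ^ 2 * C := by
    have : ‖l‖ = l := abs_of_pos hl0
    rw [this] at hsq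
    nlinarith [hsq]
  have hla : l ≤ a / (C + 1) := min_le_right _ _
  have hla' : l * (C + 1) ≤ a := by
    rw [le_div_iff₀ (by linarith : (0:ℝ) < C + 1)] at hla
    linarith
  nlinarith [mul_pos hl0 h, h2, mul_le_mul_of_nonneg_left hla' hl0.le]

/-- One projected subgradient step. -/
lemma step_bound {f : E → ℝ} {Ω : Set E} (hΩcvx : Convex ℝ Ω)
    {u g v z : E} (hz : z ∈ Ω) (hgsub : IsSubgradAt f u g) (hv : v ∈ Ω)
    {η : ℝ} (hη : 0 < η)
    (hmin : ∀ p ∈ Ω, ‖v - (u - η • g)‖ ≤ ‖p - (u - η • g)‖) :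
    2 * η * (f u - f z) ≤ ‖u - z‖ ^ 2 - ‖v - z‖ ^ 2 + η ^ 2 * ‖g‖ ^ 2 := by
  set y := u - η • g with hy
  have hvi : ⟪y - v, z - v⟫ ≤ 0 := proj_vi hΩcvx hv hmin hz
  -- ‖v - z‖² ≤ ‖y - z‖²
  have h1 : ‖v - z‖ ^ 2 ≤ ‖y - z‖ ^ 2 := by
    have hrw : y - z = (y - v) + (v - z) := by abel
    rw [hrw, norm_add_sq_real]
    have : ⟪y - v, v - z⟫ = -⟪y - v, z - v⟫ := by
      rw [← inner_neg_right]; congr 1; abel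
    nlinarith [sq_nonneg (‖y - v‖)]
  -- expand ‖y - z‖²
  have h2 : ‖y - z‖ ^ 2 = ‖u - z‖ ^ 2 - 2 * η * ⟪g, u - z⟫ + η ^ 2 * ‖g‖ ^ 2 := by
    have hrw : y - z = (u - z) + (-η) • g := by rw [hy]; module
    rw [hrw, norm_add_sq_real, real_inner_smul_right, norm_smul,
      real_inner_comm]
    have : ‖(-η : ℝ)‖ = η := by rw [norm_neg, Real.norm_eq_abs, abs_of_pos hη]
    rw [this]; ring
  -- subgradient
  have h3 : f u - f z ≤ ⟪g, u - z⟫ := by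
    have := hgsub z
    have hinn : ⟪g, z - u⟫ = -⟪g, u - z⟫ := by
      rw [← inner_neg_right]; congr 1; abel
    rw [hinn] at this
    linarith
  nlinarith [mul_le_mul_of_nonneg_left h3 (by linarith : (0:ℝ) ≤ 2 * η)]

/-- One stage of RSG: averaged iterate bound. -/
lemma stage_bound {f : E → ℝ} {Ω : Set E} (hΩcvx : Convex ℝ Ω)
    (hf : ConvexOn ℝ Set.univ f) {t : ℕ} (ht : 1 ≤ t)
    {u g : ℕ → E} {η G : ℝ} (hη : 0 < η) (hG : 0 < G)
    (hu1 : u 1 ∈ Ω)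
    (hstep : ∀ i, 1 ≤ i → i ≤ t → IsSubgradAt f (u i) (g i) ∧ u (i + 1) ∈ Ω ∧
      ∀ p ∈ Ω, ‖u (i + 1) - (u i - η • g i)‖ ≤ ‖p - (u i - η • g i)‖)
    (hGb : ∀ i, 1 ≤ i → i ≤ t → ‖g i‖ ≤ G)
    {z : E} (hz : z ∈ Ω) :
    f ((t : ℝ)⁻¹ • ∑ i ∈ Finset.Icc 1 t, u i) ≤
      f z + ‖u 1 - z‖ ^ 2 / (2 * η * t) + η * G ^ 2 / 2 := by
  have huΩ : ∀ i, 1 ≤ i → i ≤ t + 1 → u i ∈ Ω := by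
    intro i hi1 hit
    rcases Nat.exists_eq_add_of_le hi1 with ⟨j, rfl⟩
    induction j with
    | zero => simpa using hu1
    | succ n ih =>
      have : 1 + n ≤ t := by omega
      have := (hstep (1 + n) (by omega) this).2.1
      have he : 1 + (n + 1) = (1 + n) + 1 := by omega
      rw [he]; exact this
  -- telescoping sum
  have key : ∀ j, j ≤ t →
      2 * η * ∑ i ∈ Finset.Icc 1 j, (f (u i) - f z) ≤
        ‖u 1 - z‖ ^ 2 - ‖u (j + 1) - z‖ ^ 2 + j * (η ^ 2 * G ^ 2) := by
    intro j
    induction j with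
    | zero => simp
    | succ n ih =>
      intro hn
      have hle : n ≤ t := by omega
      have ihn := ih hle
      rw [Finset.sum_Icc_succ_top (by omega : 1 ≤ n + 1)]
      obtain ⟨hsub, hmem, hmin⟩ := hstep (n + 1) (by omega) hn
      have hstepb := step_bound hΩcvx hz hsub hmem hη hmin
      have hgb : ‖g (n + 1)‖ ≤ G := hGb (n + 1) (by omega) hn
      have hg2 : ‖g (n + 1)‖ ^ 2 ≤ G ^ 2 := by
        nlinarith [norm_nonneg (g (n + 1))]
      have huin : u (n + 1) ∈ Ω := huΩ (n + 1) (by omega) (by omega)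
      push_cast
      nlinarith [sq_nonneg η]
  have keyt := key t le_rfl
  have hsum : ∑ i ∈ Finset.Icc 1 t, (f (u i) - f z) ≤
      (‖u 1 - z‖ ^ 2 + t * (η ^ 2 * G ^ 2)) / (2 * η) := by
    rw [le_div_iff₀ (by linarith)]
    nlinarith [sq_nonneg (‖u (t + 1) - z‖)]
  -- Jensen
  have hcard : (Finset.Icc 1 t).card = t := by
    rw [Nat.card_Icc]; omega
  have hjensen : f ((t : ℝ)⁻¹ • ∑ i ∈ Finset.Icc 1 t, u i) ≤
      ∑ i ∈ Finset.Icc 1 t, (t : ℝ)⁻¹ * f (u i) := by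
    rw [Finset.smul_sum]
    have ht0 : (0:ℝ) < t := by exact_mod_cast ht
    exact hf.map_sum_le (fun i _ => by positivity)
      (by rw [Finset.sum_const, hcard, nsmul_eq_mul]; field_simp) (fun i _ => Set.mem_univ _)
  have ht0 : (0:ℝ) < t := by exact_mod_cast ht
  have hsum2 : ∑ i ∈ Finset.Icc 1 t, (t : ℝ)⁻¹ * f (u i) =
      (t : ℝ)⁻¹ * ∑ i ∈ Finset.Icc 1 t, f (u i) := by
    rw [Finset.mul_sum]
  have hsplit : ∑ i ∈ Finset.Icc 1 t, (f (u i) - f z) =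
      (∑ i ∈ Finset.Icc 1 t, f (u i)) - t * f z := by
    rw [Finset.sum_sub_distrib]
    simp [hcard, mul_comm]
  calc f ((t : ℝ)⁻¹ • ∑ i ∈ Finset.Icc 1 t, u i)
      ≤ (t : ℝ)⁻¹ * ∑ i ∈ Finset.Icc 1 t, f (u i) := by rw [← hsum2]; exact hjensen
    _ ≤ (t : ℝ)⁻¹ * (t * f z + (‖u 1 - z‖ ^ 2 + t * (η ^ 2 * G ^ 2)) / (2 * η)) := by
        apply mul_le_mul_of_nonneg_left _ (by positivity)
        linarith [hsum, hsplit]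
    _ = f z + ‖u 1 - z‖ ^ 2 / (2 * η * t) + η * G ^ 2 / 2 := by
        field_simp
        ring

/-- Construction of a nearby point in the ε-sublevel set. -/
lemma exists_close_point {f : E → ℝ} {Ω : Set E} (hΩcvx : Convex ℝ Ω)
    (hf : ConvexOn ℝ Set.univ f) {fstar : ℝ} (hmin : ∀ z ∈ Ω, fstar ≤ f z)
    (hOs_ne : {z ∈ Ω | f z = fstar}.Nonempty)
    (hOs_cpt : IsCompact {z ∈ Ω | f z = fstar})
    {ε θ c : ℝ} (hε : 0 < ε) (hθ0 : 0 < θ) (hc : 0 < c)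
    (hEB : ∀ z ∈ {z ∈ Ω | f z ≤ fstar + ε},
      Metric.infDist z {z ∈ Ω | f z = fstar} ≤ c * (f z - fstar) ^ θ)
    {W : E} (hW : W ∈ Ω) {R : ℝ} (hR : 0 ≤ R) (hWf : f W - fstar ≤ ε + R) :
    ∃ q ∈ Ω, f q - fstar ≤ ε ∧ ‖W - q‖ ≤ R * c * ε ^ θ / ε := by
  have hrε : (0:ℝ) < c * ε ^ θ := by
    have := Real.rpow_pos_of_pos hε θ
    positivity
  by_cases hcase : f W - fstar ≤ ε
  · exact ⟨W, hW, hcase, by simp; positivity⟩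
  push_neg at hcase
  set r := f W - fstar with hr
  have hrpos : ε < r := hcase
  obtain ⟨z, hzmem, hzd⟩ := hOs_cpt.exists_infDist_eq_dist hOs_ne W
  obtain ⟨hzΩ, hzf⟩ := hzmem
  set s := ε / r with hs
  have hs0 : 0 < s := div_pos hε (by linarith)
  have hs1 : s < 1 := (div_lt_one (by linarith)).2 hrpos
  set q := (1 - s) • z + s • W with hqdef
  have hqΩ : q ∈ Ω := hΩcvx hzΩ hW (by linarith) hs0.le (by ring)
  have hfq : f q ≤ (1 - s) * f z + s * f W :=
    hf.2 (Set.mem_univ z) (Set.mem_univ W) (by linarith) hs0.le (by ring)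
  have hfq' : f q - fstar ≤ ε := by
    have : (1 - s) * f z + s * f W = fstar + s * r := by
      rw [hzf]; ring
    have hsr : s * r = ε := div_mul_cancel₀ ε (by linarith : r ≠ 0)
    rw [this, hsr] at hfq
    linarith
  refine ⟨q, hqΩ, hfq', ?_⟩
  have hq0 : 0 ≤ f q - fstar := by linarith [hmin q hqΩ]
  have hEBq : Metric.infDist q {z ∈ Ω | f z = fstar} ≤ c * ε ^ θ := by
    refine le_trans (hEB q ⟨hqΩ, by linarith⟩) ?_
    have := Real.rpow_le_rpow hq0 hfq' hθ0.le
    nlinarith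
  have hWq : W - q = (1 - s) • (W - z) := by
    rw [hqdef]; module
  have hnWq : ‖W - q‖ = (1 - s) * ‖W - z‖ := by
    rw [hWq, norm_smul, Real.norm_eq_abs, abs_of_pos (by linarith)]
  have htri : Metric.infDist W {z ∈ Ω | f z = fstar} ≤
      Metric.infDist q {z ∈ Ω | f z = fstar} + dist W q :=
    Metric.infDist_le_infDist_add_dist
  rw [hzd, dist_eq_norm, dist_eq_norm, hnWq] at htri
  have hWz : s * ‖W - z‖ ≤ c * ε ^ θ := by linarith
  -- ‖W - q‖ ≤ (1-s) * ‖W - z‖ ≤ (1-s)/s * c ε^θ = (r-ε)/ε c ε^θ ≤ R c ε^θ / ε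
  have hsr : s * r = ε := div_mul_cancel₀ ε (by linarith : r ≠ 0)
  have hWzb : ‖W - z‖ * ε ≤ r * (c * ε ^ θ) := by
    have := mul_le_mul_of_nonneg_left hWz (by linarith : (0:ℝ) ≤ r)
    nlinarith [this, hsr]
  rw [hnWq, le_div_iff₀ hε]
  have h1s : (1 - s) * ‖W - z‖ * ε ≤ (r - ε) * (c * ε ^ θ) := by
    nlinarith [hWzb, norm_nonneg (W - z), hsr, mul_nonneg (norm_nonneg (W - z)) hε.le]
  have hRe : (r - ε) * (c * ε ^ θ) ≤ R * c * ε ^ θ := by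
    nlinarith [hrε]
  linarith

set_option maxHeartbeats 2000000 in
/-- under the local error bound `dist₂(w, Ω_*) ≤ c·(f w − f_*)^θ` on `S_ε`,
one has `B_ε ≤ c·ε^θ`; moreover with `t ≥ α²G²c²/ε^{2(1−θ)}` the RSG iterate at stage
`K = ⌈log_α(ε₀/ε)⌉` satisfies `f(w_K) − f_* ≤ 2ε`. Here `B_ε` is the supremum of
`dist₂(·, Ω_*)` over `L_ε` (equal to `0` when `L_ε = ∅`, by `Real.sSup_empty`). -/
theorem stmt_6 {d : ℕ} (f : EuclideanSpace ℝ (Fin d) → ℝ)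
    (Ω : Set (EuclideanSpace ℝ (Fin d)))
    (hΩne : Ω.Nonempty) (hΩcl : IsClosed Ω) (hΩcvx : Convex ℝ Ω)
    (hf : ConvexOn ℝ Set.univ f)
    (fstar : ℝ) (hmin : ∀ z ∈ Ω, fstar ≤ f z)
    (hOs_ne : {z ∈ Ω | f z = fstar}.Nonempty)
    (hOs_cvx : Convex ℝ {z ∈ Ω | f z = fstar})
    (hOs_cpt : IsCompact {z ∈ Ω | f z = fstar})
    (G : ℝ) (hG : 0 < G)
    (hGbnd : ∀ z ∈ Ω, ∀ g, IsSubgradAt f z g → ‖g‖ ≤ G)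
    (ε : ℝ) (hε : 0 < ε)
    (θ : ℝ) (hθ0 : 0 < θ) (hθ1 : θ ≤ 1) (c : ℝ) (hc : 0 < c)
    (hEB : ∀ z ∈ {z ∈ Ω | f z ≤ fstar + ε},
      Metric.infDist z {z ∈ Ω | f z = fstar} ≤ c * (f z - fstar) ^ θ)
    (Bε : ℝ)
    (hB : Bε = sSup ((fun z => Metric.infDist z {z ∈ Ω | f z = fstar}) ''
      {z ∈ Ω | f z = fstar + ε})) :
    Bε ≤ c * ε ^ θ ∧
      ∀ ε₀ : ℝ, 0 < ε₀ → ε ≤ ε₀ → ∀ α : ℝ, 1 < α → ∀ t : ℕ,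
        α ^ 2 * G ^ 2 * c ^ 2 / ε ^ (2 * (1 - θ)) ≤ (t : ℝ) →
        ∀ w : ℕ → EuclideanSpace ℝ (Fin d), w 0 ∈ Ω →
          f (w 0) - fstar ≤ ε₀ → IsRSGSeq f Ω G ε₀ α t w →
          f (w (⌈Real.logb α (ε₀ / ε)⌉.toNat)) - fstar ≤ 2 * ε := by
  have hεθ : (0:ℝ) < ε ^ θ := Real.rpow_pos_of_pos hε θ
  constructor
  · rw [hB]
    apply Real.sSup_le
    · rintro x ⟨z, ⟨hzΩ, hzf⟩, rfl⟩
      have := hEB z ⟨hzΩ, le_of_eq hzf⟩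
      have h2 : f z - fstar = ε := by linarith [hzf]
      rw [h2] at this
      exact this
    · positivity
  intro ε₀ hε₀ hεε₀ α hα t htbnd w hw0 hwf hRSG
  obtain ⟨u, g, hu1, hstep, hwavg⟩ := hRSG
  have hα0 : (0:ℝ) < α := lt_trans one_pos hα
  have hpowpos : (0:ℝ) < ε ^ (2 * (1 - θ)) := Real.rpow_pos_of_pos hε _
  have ht0 : (0:ℝ) < t := lt_of_lt_of_le (by positivity) htbnd
  have ht1 : 1 ≤ t := by exact_mod_cast Nat.one_le_iff_ne_zero.2 (by
    intro h; rw [h] at ht0; simp at ht0)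
  -- key rpow inequality: α² G² c² (ε^θ)² ≤ t ε²
  have key : α ^ 2 * G ^ 2 * c ^ 2 * (ε ^ θ) ^ 2 ≤ (t:ℝ) * ε ^ 2 := by
    have h1 : α ^ 2 * G ^ 2 * c ^ 2 ≤ (t:ℝ) * ε ^ (2 * (1 - θ)) := by
      rw [div_le_iff₀ hpowpos] at htbnd; exact htbnd
    have h2 : ε ^ (2 * (1 - θ)) * (ε ^ θ) ^ 2 = ε ^ 2 := by
      rw [← Real.rpow_natCast (ε ^ θ) 2, ← Real.rpow_mul hε.le, ← Real.rpow_add hε,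
        ← Real.rpow_natCast ε 2]
      congr 1
      push_cast
      ring
    calc α ^ 2 * G ^ 2 * c ^ 2 * (ε ^ θ) ^ 2
        ≤ (t:ℝ) * ε ^ (2 * (1 - θ)) * (ε ^ θ) ^ 2 := by
          nlinarith [sq_nonneg (ε ^ θ)]
      _ = (t:ℝ) * ε ^ 2 := by rw [mul_assoc, h2]
  -- main induction
  have main : ∀ k, w k ∈ Ω ∧ f (w k) - fstar ≤ ε₀ / α ^ k + ε := by
    intro k
    induction k with
    | zero =>
      refine ⟨hw0, ?_⟩
      simp only [pow_zero, div_one]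
      linarith
    | succ k ih =>
      obtain ⟨hWΩ, hWf⟩ := ih
      set W := w k with hW
      have hR0 : (0:ℝ) ≤ ε₀ / α ^ k := by positivity
      obtain ⟨q, hqΩ, hqf, hqd⟩ := exists_close_point hΩcvx hf hmin hOs_ne hOs_cpt
        hε hθ0 hc hEB hWΩ hR0 (by linarith)
      set η := ε₀ / (α ^ (k+1) * G ^ 2) with hη
      have hηpos : 0 < η := by positivity
      have hu1k : u (k+1) 1 = W := by
        have := hu1 (k+1) (by omega); simpa using this
      have hstepk := hstep (k+1) (by omega)
      have humem : ∀ i, 1 ≤ i → i ≤ t → u (k+1) i ∈ Ω := by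
        intro i hi1 hit
        rcases Nat.lt_or_ge i 2 with h2 | h2
        · have : i = 1 := by omega
          rw [this, hu1k]; exact hWΩ
        · have hj : i - 1 + 1 = i := by omega
          have := (hstepk (i - 1) (by omega) (by omega)).2.1
          rwa [hj] at this
      have hGb : ∀ i, 1 ≤ i → i ≤ t → ‖g (k+1) i‖ ≤ G := fun i hi1 hit =>
        hGbnd _ (humem i hi1 hit) _ (hstepk i hi1 hit).1
      have hsb := stage_bound hΩcvx hf ht1 hηpos hG
        (by rw [hu1k]; exact hWΩ) hstepk hGb hqΩ
      rw [← hwavg (k+1) (by omega), hu1k] at hsb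
      -- arithmetic
      set D := ε₀ / α ^ k * c * ε ^ θ / ε with hD
      have hD0 : 0 ≤ D := by positivity
      have hsq : ‖W - q‖ ^ 2 ≤ D ^ 2 := by
        nlinarith [norm_nonneg (W - q), hqd]
      have hdiv : ‖W - q‖ ^ 2 / (2 * η * t) ≤ D ^ 2 / (2 * η * t) := by
        have h := mul_le_mul_of_nonneg_right hsq
          (by positivity : (0:ℝ) ≤ (2 * η * (t:ℝ))⁻¹)
        simpa [div_eq_mul_inv] using h
      have hterm2 : η * G ^ 2 / 2 = ε₀ / (2 * α ^ (k+1)) := by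
        rw [hη]; field_simp
      have hAk : (0:ℝ) < α ^ k := by positivity
      have hDα : D * α ^ (k+1) = ε₀ * c * ε ^ θ * α / ε := by
        rw [hD, pow_succ]
        field_simp
      have hmaster : (D * α ^ (k+1)) ^ 2 * G ^ 2 ≤ ε₀ ^ 2 * t := by
        rw [hDα, div_pow, div_mul_eq_mul_div, div_le_iff₀ (by positivity)]
        have h := mul_le_mul_of_nonneg_left key (sq_nonneg ε₀)
        calc (ε₀ * c * ε ^ θ * α) ^ 2 * G ^ 2
            = ε₀ ^ 2 * (α ^ 2 * G ^ 2 * c ^ 2 * (ε ^ θ) ^ 2) := by ring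
          _ ≤ ε₀ ^ 2 * ((t:ℝ) * ε ^ 2) := h
          _ = ε₀ ^ 2 * (t:ℝ) * ε ^ 2 := by ring
      have hterm1 : D ^ 2 / (2 * η * t) ≤ ε₀ / (2 * α ^ (k+1)) := by
        rw [div_le_div_iff₀ (by positivity) (by positivity)]
        have hrhs : ε₀ * (2 * η * t) = 2 * ε₀ ^ 2 * t / (α ^ (k+1) * G ^ 2) := by
          rw [hη]; field_simp
        rw [hrhs, le_div_iff₀ (by positivity)]
        calc D ^ 2 * (2 * α ^ (k+1)) * (α ^ (k+1) * G ^ 2)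
            = 2 * ((D * α ^ (k+1)) ^ 2 * G ^ 2) := by ring
          _ ≤ 2 * (ε₀ ^ 2 * (t:ℝ)) := by linarith [hmaster]
          _ = 2 * ε₀ ^ 2 * (t:ℝ) := by ring
      refine ⟨?_, ?_⟩
      · rw [hwavg (k+1) (by omega), Finset.smul_sum]
        have htne : (t:ℝ) ≠ 0 := ne_of_gt ht0
        apply hΩcvx.sum_mem (fun i _ => by positivity)
          (by rw [Finset.sum_const, Nat.card_Icc, Nat.add_sub_cancel, nsmul_eq_mul]
              exact mul_inv_cancel₀ htne)
        intro i hi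
        simp only [Finset.mem_Icc] at hi
        exact humem i hi.1 hi.2
      · have hak : ε₀ / (2 * α ^ (k+1)) + ε₀ / (2 * α ^ (k+1)) = ε₀ / α ^ (k+1) := by
          field_simp
          ring
        linarith [hsb, hdiv, hterm1, hterm2, hqf, hak]
  -- conclude
  set K := (⌈Real.logb α (ε₀ / ε)⌉).toNat with hK
  have hlogK : Real.logb α (ε₀ / ε) ≤ (K:ℝ) := by
    calc Real.logb α (ε₀ / ε) ≤ (⌈Real.logb α (ε₀ / ε)⌉ : ℝ) := Int.le_ceil _
      _ ≤ ((K:ℤ):ℝ) := by exact_mod_cast Int.self_le_toNat _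
      _ = (K:ℝ) := by push_cast; ring
  have hαK : ε₀ / ε ≤ α ^ K := by
    have h1 : ε₀ / ε = α ^ Real.logb α (ε₀ / ε) :=
      (Real.rpow_logb hα0 (ne_of_gt hα) (by positivity)).symm
    rw [h1, ← Real.rpow_natCast α K]
    exact Real.rpow_le_rpow_of_exponent_le hα.le hlogK
  have hεK : ε₀ / α ^ K ≤ ε := by
    rw [div_le_iff₀ (by positivity)]
    rw [div_le_iff₀ hε] at hαK
    linarith [hαK]
  have := (main K).2
  linarith
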